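/- Let A and B be positive semidefinite operators on a finite-dimensional Hilbert space. Then the infimum over all operators T with 0 ≤ T ≤ I of Tr[(I − T)A] + Tr[TB] equals (1/2)(Tr[A + B] − ‖A − B‖₁). -/

import Mathlib

open Matrix ComplexOrder

noncomputable def traceNorm {n : ℕ} (X : Matrix (Fin n) (Fin n) ℂ) : ℝ :=
  (((Matrix.posSemidef_conjTranspose_mul_self X).1.eigenvectorUnitary : Matrix (Fin n) (Fin n) ℂ) *
    diagonal (((↑) : ℝ → ℂ) ∘ (√·) ∘ (Matrix.posSemidef_conjTranspose_mul_self X).1.eigenvalues) *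
    (star (Matrix.posSemidef_conjTranspose_mul_self X).1.eigenvectorUnitary :
      Matrix (Fin n) (Fin n) ℂ)).trace.re

noncomputable def mpow {n : ℕ} {A : Matrix (Fin n) (Fin n) ℂ} (hA : A.PosSemidef) (s : ℝ) :
    Matrix (Fin n) (Fin n) ℂ :=
  hA.1.cfc (fun x => if x = 0 then 0 else x ^ s)

section aux
variable {n : ℕ}

lemma diag_nonneg_of_psd {S : Matrix (Fin n) (Fin n) ℂ} (hS : S.PosSemidef) (i : Fin n) :
    0 ≤ S i i := by
  exact hS.diag_nonneg

lemma trace_mul_diag (M : Matrix (Fin n) (Fin n) ℂ) (d : Fin n → ℂ) :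
    (M * diagonal d).trace = ∑ i, M i i * d i := by
  simp [Matrix.trace, Matrix.mul_diagonal, Matrix.diag]

lemma trace_conj_diag {U : Matrix (Fin n) (Fin n) ℂ} (hUU : star U * U = 1) (d : Fin n → ℂ) :
    (U * diagonal d * star U).trace = ∑ i, d i := by
  rw [trace_mul_cycle, hUU, one_mul, trace_diagonal]

lemma conj_sq {U : Matrix (Fin n) (Fin n) ℂ} (hUU : star U * U = 1) (d : Fin n → ℂ) :
    (U * diagonal d * star U) ^ 2 = U * diagonal (fun i => d i * d i) * star U := by
  rw [pow_two]
  calc U * diagonal d * star U * (U * diagonal d * star U)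
      = U * diagonal d * (star U * U) * diagonal d * star U := by
        simp only [mul_assoc]
    _ = U * (diagonal d * diagonal d) * star U := by rw [hUU]; simp only [mul_one, mul_assoc]
    _ = U * diagonal (fun i => d i * d i) * star U := by rw [diagonal_mul_diagonal]

open scoped MatrixOrder in
lemma psd_sqrt_unique {R M : Matrix (Fin n) (Fin n) ℂ} (hR : R.PosSemidef) (hM : M.PosSemidef)
    (h : R ^ 2 = M) : R = hM.1.cfc Real.sqrt := by
  rw [← hM.1.cfc_eq, ← CFC.sqrt_unique (a := M) (by rw [← sq, h]) hR.nonneg, CFC.sqrt_eq_cfc,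
    cfc_nnreal_eq_real _ M]
  refine cfc_congr fun x _ => ?_
  rw [Real.coe_sqrt, Real.coe_toNNReal']
  rcases le_total 0 x with hx | hx
  · rw [max_eq_left hx]
  · rw [max_eq_right hx, Real.sqrt_zero, Real.sqrt_eq_zero'.mpr hx]

end aux

theorem stmt1 {n : ℕ} {A B : Matrix (Fin n) (Fin n) ℂ}
    (hA : A.PosSemidef) (hB : B.PosSemidef) :
    sInf {x : ℝ | ∃ T : Matrix (Fin n) (Fin n) ℂ, T.PosSemidef ∧ (1 - T).PosSemidef ∧
        x = (((1 - T) * A).trace).re + ((T * B).trace).re} =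
      (1/2) * (((A + B).trace).re - traceNorm (A - B)) := by
  classical
  set D := A - B with hDdef
  have hD : D.IsHermitian := hA.1.sub hB.1
  set U : Matrix (Fin n) (Fin n) ℂ := (hD.eigenvectorUnitary : Matrix (Fin n) (Fin n) ℂ) with hUdef
  have hUU : star U * U = 1 := mem_unitaryGroup_iff'.mp hD.eigenvectorUnitary.2
  have hUU' : U * star U = 1 := mem_unitaryGroup_iff.mp hD.eigenvectorUnitary.2
  set lam := hD.eigenvalues with hlamdef
  have hspec : D = U * diagonal (fun i => (lam i : ℂ)) * star U := by
    have hst := hD.spectral_theorem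
    rw [Unitary.conjStarAlgAut_apply] at hst
    exact hst
  -- trace of D
  have htrD : (D.trace).re = ∑ i, lam i := by
    rw [hspec, trace_conj_diag hUU]
    rw [← Complex.ofReal_sum]
    exact Complex.ofReal_re _
  -- trace norm
  have htn : traceNorm D = ∑ i, |lam i| := by
    have habs : ∀ i, (0:ℂ) ≤ ((|lam i| : ℝ) : ℂ) := fun i =>
      Complex.zero_le_real.mpr (abs_nonneg _)
    have hR : (U * diagonal (fun i => ((|lam i| : ℝ) : ℂ)) * star U).PosSemidef := by
      rw [show star U = Uᴴ from rfl]
      exact (posSemidef_diagonal_iff.mpr habs).mul_mul_conjTranspose_same U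
    have hsq : (U * diagonal (fun i => ((|lam i| : ℝ) : ℂ)) * star U) ^ 2 = Dᴴ * D := by
      rw [conj_sq hUU, hD.eq]
      have heq : (fun i => ((|lam i|:ℝ):ℂ) * ((|lam i|:ℝ):ℂ))
          = fun i => ((lam i : ℂ)) * ((lam i : ℂ)) := by
        funext i; rw [← Complex.ofReal_mul, ← Complex.ofReal_mul, abs_mul_abs_self]
      rw [heq, ← conj_sq hUU, ← hspec, sq]
    have e2 : traceNorm D = ((posSemidef_conjTranspose_mul_self D).1.cfc Real.sqrt).trace.re := by
      rw [traceNorm, IsHermitian.cfc]; rfl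
    rw [e2, ← psd_sqrt_unique hR (posSemidef_conjTranspose_mul_self D) hsq, trace_conj_diag hUU, ← Complex.ofReal_sum, Complex.ofReal_re]
  -- value of any admissible T
  have elem : ∀ T : Matrix (Fin n) (Fin n) ℂ,
      (((1 - T) * A).trace).re + ((T * B).trace).re = (A.trace).re - ((T * D).trace).re := by
    intro T
    have h1 : (1 - T) * A = A - T * A := by rw [sub_mul, one_mul]
    have h2 : T * D = T * A - T * B := by rw [hDdef, mul_sub]
    rw [h1, h2, trace_sub, trace_sub, Complex.sub_re, Complex.sub_re]
    ring
  -- key trace formula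
  have key : ∀ T : Matrix (Fin n) (Fin n) ℂ,
      (T * D).trace = ∑ i, (star U * T * U) i i * (lam i : ℂ) := by
    intro T
    conv_lhs => rw [hspec]
    rw [show T * (U * diagonal (fun i => (lam i : ℂ)) * star U)
        = (T * U * diagonal (fun i => (lam i : ℂ))) * star U by simp only [mul_assoc],
      trace_mul_comm,
      show star U * (T * U * diagonal (fun i => (lam i : ℂ)))
        = (star U * T * U) * diagonal (fun i => (lam i : ℂ)) by simp only [mul_assoc],
      trace_mul_diag]
  -- upper bound on Tr(T D) for admissible T
  have lb : ∀ T : Matrix (Fin n) (Fin n) ℂ, T.PosSemidef → (1 - T).PosSemidef →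
      ((T * D).trace).re ≤ ∑ i, max (lam i) 0 := by
    intro T hT hT1
    set S := star U * T * U with hSdef
    have hS : S.PosSemidef := hT.conjTranspose_mul_mul_same U
    have hS1 : (1 - S).PosSemidef := by
      have h1S : 1 - S = star U * (1 - T) * U := by
        rw [mul_sub, mul_one, sub_mul, hUU, hSdef]
      rw [h1S]
      exact hT1.conjTranspose_mul_mul_same U
    rw [key T, ← hSdef, Complex.re_sum]
    apply Finset.sum_le_sum
    intro i _
    have h0 := diag_nonneg_of_psd hS i
    have h1 := diag_nonneg_of_psd hS1 i
    rw [Complex.le_def] at h0 h1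
    simp only [Matrix.sub_apply, Matrix.one_apply_eq, Complex.sub_re, Complex.one_re,
      Complex.zero_re, Complex.zero_im] at h0 h1
    rw [Complex.mul_re, Complex.ofReal_re, Complex.ofReal_im, mul_zero, sub_zero]
    rcases le_or_gt (lam i) 0 with h | h
    · exact le_trans (mul_nonpos_of_nonneg_of_nonpos h0.1 h) (le_max_right _ _)
    · calc (S i i).re * lam i ≤ 1 * lam i :=
            mul_le_mul_of_nonneg_right (by linarith [h1.1]) h.le
        _ = lam i := one_mul _
        _ ≤ max (lam i) 0 := le_max_left _ _
  -- the optimal T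
  set p : Fin n → ℂ := fun i => if 0 < lam i then 1 else 0 with hpdef
  set T₀ : Matrix (Fin n) (Fin n) ℂ := U * diagonal p * star U with hT₀def
  have hT₀ : T₀.PosSemidef := by
    refine (posSemidef_diagonal_iff.mpr fun i => ?_).mul_mul_conjTranspose_same U
    simp only [hpdef]
    split <;> norm_num
  have hT₀1 : (1 - T₀).PosSemidef := by
    have hdd : diagonal (fun i => 1 - p i) = 1 - diagonal p := by
      rw [← diagonal_one, diagonal_sub]
    have h1T : 1 - T₀ = U * diagonal (fun i => 1 - p i) * star U := by
      rw [hdd, mul_sub, mul_one, sub_mul, hUU', hT₀def]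
    rw [h1T]
    refine (posSemidef_diagonal_iff.mpr fun i => ?_).mul_mul_conjTranspose_same U
    simp only [hpdef]
    split <;> norm_num
  have hS₀ : star U * T₀ * U = diagonal p := by
    calc star U * (U * diagonal p * star U) * U
        = (star U * U) * diagonal p * (star U * U) := by simp only [mul_assoc]
      _ = diagonal p := by rw [hUU, one_mul, mul_one]
  have hval₀ : ((T₀ * D).trace).re = ∑ i, max (lam i) 0 := by
    rw [key T₀, hS₀, Complex.re_sum]
    apply Finset.sum_congr rfl
    intro i _
    rw [diagonal_apply_eq, hpdef]
    rcases lt_or_ge 0 (lam i) with h | h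
    · simp [h, Complex.mul_re, max_eq_left h.le]
    · simp [not_lt.mpr h, max_eq_right h]
  -- the optimal value
  set v : ℝ := (A.trace).re - ∑ i, max (lam i) 0 with hvdef
  have hmem : v ∈ {x : ℝ | ∃ T : Matrix (Fin n) (Fin n) ℂ, T.PosSemidef ∧ (1 - T).PosSemidef ∧
      x = (((1 - T) * A).trace).re + ((T * B).trace).re} :=
    ⟨T₀, hT₀, hT₀1, by rw [elem T₀, hval₀]⟩
  have hlb : ∀ x ∈ {x : ℝ | ∃ T : Matrix (Fin n) (Fin n) ℂ, T.PosSemidef ∧ (1 - T).PosSemidef ∧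
      x = (((1 - T) * A).trace).re + ((T * B).trace).re}, v ≤ x := by
    rintro x ⟨T, hT, hT1, rfl⟩
    rw [elem T, hvdef]
    linarith [lb T hT hT1]
  have hinf : sInf {x : ℝ | ∃ T : Matrix (Fin n) (Fin n) ℂ, T.PosSemidef ∧ (1 - T).PosSemidef ∧
      x = (((1 - T) * A).trace).re + ((T * B).trace).re} = v :=
    le_antisymm (csInf_le ⟨v, fun x hx => hlb x hx⟩ hmem) (le_csInf ⟨v, hmem⟩ hlb)
  rw [hinf, hvdef, htn, trace_add, Complex.add_re]
  have hAB : (A.trace).re - (B.trace).re = ∑ i, lam i := by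
    have hts : D.trace = A.trace - B.trace := by rw [hDdef, trace_sub]
    rw [← htrD, hts, Complex.sub_re]
  have hmax : ∑ i, max (lam i) 0 = ((∑ i, lam i) + ∑ i, |lam i|) / 2 := by
    rw [← Finset.sum_add_distrib, Finset.sum_div]
    apply Finset.sum_congr rfl
    intro i _
    rcases le_total 0 (lam i) with h | h
    · rw [max_eq_left h, abs_of_nonneg h]; ring
    · rw [max_eq_right h, abs_of_nonpos h]; ring
  rw [hmax]
  linarith
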